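/- Assume g : ℝ^d → ℝ^{d×p} is continuous, U ⊂ C([0,T],ℝ^{d−r}) is compact under ‖·‖∞, U_n ⊆ U are nonempty compact subsets, m is continuous on [0,T], ‖m̂_n − m‖∞ → 0 in probability, and for every u ∈ U the matrices B_u and T·I_d − A_u B_u⁻¹ A_uᵀ are invertible, as are (almost surely) the corresponding hatted matrices for u ∈ U_n. Then: sup_{u∈U_n} ‖θ̂_u − θ_u‖ = o_P(1), sup_{u∈U_n} ‖θ_u‖ = O(1), and sup_{u∈U_n} ‖θ̂_u‖ = O_P(1). -/

import Mathlib

open MeasureTheory Filter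
open scoped Matrix

attribute [local instance] Matrix.frobeniusSeminormedAddCommGroup
  Matrix.frobeniusNormedAddCommGroup Matrix.frobeniusNormedSpace

noncomputable section

namespace ODEC

/-- sup over `[0,T]` of the norm of `f`. -/
def supN {E : Type*} [SeminormedAddCommGroup E] (T : ℝ) (f : ℝ → E) : ℝ :=
  ⨆ t : Set.Icc (0:ℝ) T, ‖f t‖

/-- extension of a continuous function on `[0,T]` to `ℝ`. -/
def ext {T : ℝ} (hT : 0 ≤ T) {E : Type*} [TopologicalSpace E]
    (f : C(Set.Icc (0:ℝ) T, E)) : ℝ → E :=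
  fun t => f (Set.projIcc 0 T hT t)

/-- combining measured and unmeasured components into one vector function -/
def pair {r q : ℕ} (m : ℝ → EuclideanSpace ℝ (Fin r)) (u : ℝ → EuclideanSpace ℝ (Fin q)) :
    ℝ → EuclideanSpace ℝ (Fin (r + q)) :=
  fun t => (EuclideanSpace.equiv (Fin (r + q)) ℝ).symm
    (Fin.append (EuclideanSpace.equiv (Fin r) ℝ (m t)) (EuclideanSpace.equiv (Fin q) ℝ (u t)))

def measPart {r q : ℕ} (x : ℝ → EuclideanSpace ℝ (Fin (r + q))) : ℝ → EuclideanSpace ℝ (Fin r) :=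
  fun t => (EuclideanSpace.equiv (Fin r) ℝ).symm fun i => x t (Fin.castAdd q i)

def unmeasPart {r q : ℕ} (x : ℝ → EuclideanSpace ℝ (Fin (r + q))) : ℝ → EuclideanSpace ℝ (Fin q) :=
  fun t => (EuclideanSpace.equiv (Fin q) ℝ).symm fun i => x t (Fin.natAdd r i)

/-- matrix-vector multiplication between Euclidean spaces -/
def mv {a b : ℕ} (A : Matrix (Fin a) (Fin b) ℝ) (v : EuclideanSpace ℝ (Fin b)) :
    EuclideanSpace ℝ (Fin a) :=
  Matrix.toEuclideanLin A v

variable {n p : ℕ}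

def Gm (g : EuclideanSpace ℝ (Fin n) → Matrix (Fin n) (Fin p) ℝ)
    (x : ℝ → EuclideanSpace ℝ (Fin n)) (t : ℝ) : Matrix (Fin n) (Fin p) ℝ :=
  ∫ s in (0:ℝ)..t, g (x s)

def Am (g : EuclideanSpace ℝ (Fin n) → Matrix (Fin n) (Fin p) ℝ)
    (x : ℝ → EuclideanSpace ℝ (Fin n)) (T : ℝ) : Matrix (Fin n) (Fin p) ℝ :=
  ∫ t in (0:ℝ)..T, Gm g x t

def Bm (g : EuclideanSpace ℝ (Fin n) → Matrix (Fin n) (Fin p) ℝ)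
    (x : ℝ → EuclideanSpace ℝ (Fin n)) (T : ℝ) : Matrix (Fin p) (Fin p) ℝ :=
  ∫ t in (0:ℝ)..T, (Gm g x t)ᵀ * Gm g x t

/-- the matrix `T·I_d − A B⁻¹ Aᵀ`. -/
def Cm (g : EuclideanSpace ℝ (Fin n) → Matrix (Fin n) (Fin p) ℝ)
    (x : ℝ → EuclideanSpace ℝ (Fin n)) (T : ℝ) : Matrix (Fin n) (Fin n) ℝ :=
  T • (1 : Matrix (Fin n) (Fin n) ℝ) - Am g x T * (Bm g x T)⁻¹ * (Am g x T)ᵀ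

def xiv (g : EuclideanSpace ℝ (Fin n) → Matrix (Fin n) (Fin p) ℝ)
    (x : ℝ → EuclideanSpace ℝ (Fin n)) (T : ℝ) : EuclideanSpace ℝ (Fin n) :=
  mv (Cm g x T)⁻¹
    (∫ t in (0:ℝ)..T, mv (1 - Am g x T * (Bm g x T)⁻¹ * (Gm g x t)ᵀ) (x t))

def thv (g : EuclideanSpace ℝ (Fin n) → Matrix (Fin n) (Fin p) ℝ)
    (x : ℝ → EuclideanSpace ℝ (Fin n)) (T : ℝ) : EuclideanSpace ℝ (Fin p) :=
  mv (Bm g x T)⁻¹ (∫ t in (0:ℝ)..T, mv (Gm g x t)ᵀ (x t - xiv g x T))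

def Mf (g : EuclideanSpace ℝ (Fin n) → Matrix (Fin n) (Fin p) ℝ)
    (x : ℝ → EuclideanSpace ℝ (Fin n)) (T : ℝ) : ℝ :=
  ∫ t in (0:ℝ)..T, ‖x t - xiv g x T - mv (Gm g x t) (thv g x T)‖ ^ 2

/-- `x` solves the integral equation `x(t) = ξ + (∫₀ᵗ g(x(s)) ds)·θ` on `[0,T]`. -/
def IsSol (g : EuclideanSpace ℝ (Fin n) → Matrix (Fin n) (Fin p) ℝ) (T : ℝ)
    (θ : EuclideanSpace ℝ (Fin p)) (ξ : EuclideanSpace ℝ (Fin n))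
    (x : ℝ → EuclideanSpace ℝ (Fin n)) : Prop :=
  ContinuousOn x (Set.Icc 0 T) ∧ ∀ t ∈ Set.Icc (0:ℝ) T, x t = ξ + mv (Gm g x t) θ

end ODEC

open ODEC

/-! The estimator `θ_u` is continuous, for the sup norm, as a function of the pair `(m, u)` at
every pair where `B` and `T·I − A B⁻¹ Aᵀ` are invertible: it is assembled from parametric
integrals of continuous integrands by matrix products and inversions. Since `U` is compact, the
tube lemma turns this into continuity in `m` uniformly over `u ∈ U`, so `‖m̂_n − m‖∞ → 0` in
probability gives uniform consistency. Continuity on the compact set `{m} × U` bounds `θ_u`, and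
the two facts together bound `θ̂_u` in probability. -/

open Set Topology

theorem continuousAt_matrix_inv_of_isUnit {ι K : Type*} [Fintype ι] [DecidableEq ι] [Field K]
    [TopologicalSpace K] [IsTopologicalRing K] [ContinuousInv₀ K] {A : Matrix ι ι K}
    (hA : IsUnit A) : ContinuousAt Inv.inv A := by
  refine continuousAt_matrix_inv A ?_
  rw [Ring.inverse_eq_inv']
  exact continuousAt_inv₀ ((Matrix.isUnit_iff_isUnit_det A).1 hA).ne_zero

theorem IsCompact.eventually_forall_dist_lt {X Y E : Type*} [TopologicalSpace X]
    [TopologicalSpace Y] [PseudoMetricSpace E] {K : Set Y} (hK : IsCompact K) {Φ : X × Y → E}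
    {x₀ : X} (hΦ : ∀ y ∈ K, ContinuousAt Φ (x₀, y)) {ε : ℝ} (hε : 0 < ε) :
    ∀ᶠ x in 𝓝 x₀, ∀ y ∈ K, dist (Φ (x, y)) (Φ (x₀, y)) < ε := by
  refine hK.eventually_forall_of_forall_eventually fun y hy => ?_
  have hslice : ContinuousAt (fun z : X × Y => Φ (x₀, z.2)) (x₀, y) :=
    ContinuousAt.comp (f := fun z : X × Y => (x₀, z.2)) (hΦ y hy)
      (continuous_const.prodMk continuous_snd).continuousAt
  exact Metric.tendsto_nhds.1 ((hΦ y hy).dist hslice) ε hε |>.mono fun z hz => by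
    simpa using hz

theorem MeasureTheory.tendstoInMeasure_const_of_forall_exists_le_norm {Ω α E ι : Type*}
    [MeasurableSpace Ω] {P : Measure Ω} [TopologicalSpace α] [CompactSpace α]
    [SeminormedAddCommGroup E] {l : Filter ι} {f : ι → Ω → C(α, E)} {f₀ : C(α, E)}
    (hf : ∀ ε > (0:ℝ), Tendsto (fun i => P {ω | ∃ t, ε ≤ ‖f i ω t - f₀ t‖}) l (𝓝 0)) :
    TendstoInMeasure P f l fun _ => f₀ := by
  refine tendstoInMeasure_iff_dist.2 fun ε hε => ?_
  refine tendsto_of_tendsto_of_tendsto_of_le_of_le tendsto_const_nhds (hf (ε / 2) (by positivity))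
    (fun _ => zero_le) fun i => measure_mono fun ω (hω : ε ≤ dist (f i ω) f₀) => ?_
  show ∃ t, ε / 2 ≤ ‖f i ω t - f₀ t‖
  by_contra! hclose
  have : dist (f i ω) f₀ ≤ ε / 2 :=
    (ContinuousMap.dist_le (by positivity)).2 fun t => by
      simpa [dist_eq_norm] using (hclose t).le
  linarith

theorem MeasureTheory.TendstoInMeasure.tendsto_measure_exists_le_dist {Ω ι X Y E : Type*}
    [MeasurableSpace Ω] {P : Measure Ω} [PseudoMetricSpace X] [TopologicalSpace Y]
    [PseudoMetricSpace E] {l : Filter ι} {f : ι → Ω → X} {x₀ : X}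
    (hf : TendstoInMeasure P f l fun _ => x₀) {K : Set Y} (hK : IsCompact K) {Φ : X × Y → E}
    (hΦ : ∀ y ∈ K, ContinuousAt Φ (x₀, y)) {ε : ℝ} (hε : 0 < ε) :
    Tendsto (fun i => P {ω | ∃ y ∈ K, ε ≤ dist (Φ (f i ω, y)) (Φ (x₀, y))}) l (𝓝 0) := by
  obtain ⟨δ, hδ, hball⟩ := Metric.eventually_nhds_iff.1 (hK.eventually_forall_dist_lt hΦ hε)
  refine tendsto_of_tendsto_of_tendsto_of_le_of_le tendsto_const_nhds
    (tendstoInMeasure_iff_dist.1 hf δ hδ) (fun _ => zero_le) fun i => measure_mono ?_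
  rintro ω ⟨y, hy, hfar⟩
  show δ ≤ dist (f i ω) x₀
  by_contra! hnear
  exact (hball hnear y hy).not_ge hfar

theorem MeasureTheory.eventually_measure_exists_le_norm_lt {Ω ι Y E : Type*} [MeasurableSpace Ω]
    {P : Measure Ω} [SeminormedAddCommGroup E] {l : Filter ι} {S : ι → Set Y}
    {F : ι → Ω → Y → E} {θ : Y → E} {C : ℝ} (hC : ∀ i, ∀ y ∈ S i, ‖θ y‖ ≤ C)
    (hF : Tendsto (fun i => P {ω | ∃ y ∈ S i, 1 ≤ ‖F i ω y - θ y‖}) l (𝓝 0)) {δ : ℝ}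
    (hδ : 0 < δ) : ∀ᶠ i in l, P {ω | ∃ y ∈ S i, C + 1 ≤ ‖F i ω y‖} < ENNReal.ofReal δ := by
  filter_upwards [hF.eventually_lt_const (ENNReal.ofReal_pos.2 hδ)] with i hi
  refine lt_of_le_of_lt (measure_mono ?_) hi
  rintro ω ⟨y, hy, hlarge⟩
  refine ⟨y, hy, ?_⟩
  linarith [hC i y hy, norm_sub_norm_le (F i ω y) (θ y)]

namespace ODEC

variable {X : Type*} [TopologicalSpace X] {a b : ℕ}

theorem mv_eq_toLp_mulVec (A : Matrix (Fin a) (Fin b) ℝ) (v : EuclideanSpace ℝ (Fin b)) :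
    mv A v = WithLp.toLp 2 (A *ᵥ WithLp.ofLp v) :=
  rfl

theorem continuous_mv :
    Continuous fun z : Matrix (Fin a) (Fin b) ℝ × EuclideanSpace ℝ (Fin b) => mv z.1 z.2 := by
  simp only [mv_eq_toLp_mulVec]
  exact (PiLp.continuous_toLp 2 _).comp
    (continuous_fst.matrix_mulVec ((PiLp.continuous_ofLp 2 _).comp continuous_snd))

theorem _root_.Continuous.mv {A : X → Matrix (Fin a) (Fin b) ℝ}
    {v : X → EuclideanSpace ℝ (Fin b)} (hA : Continuous A) (hv : Continuous v) :
    Continuous fun x => mv (A x) (v x) :=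
  continuous_mv.comp (hA.prodMk hv)

theorem _root_.ContinuousAt.mv {A : X → Matrix (Fin a) (Fin b) ℝ}
    {v : X → EuclideanSpace ℝ (Fin b)} {x₀ : X} (hA : ContinuousAt A x₀) (hv : ContinuousAt v x₀) :
    ContinuousAt (fun x => mv (A x) (v x)) x₀ :=
  ContinuousAt.comp (f := fun x => (A x, v x)) continuous_mv.continuousAt (hA.prodMk hv)

section Family

variable {n p : ℕ} {T : ℝ} (g : EuclideanSpace ℝ (Fin n) → Matrix (Fin n) (Fin p) ℝ)
  {x : X → ℝ → EuclideanSpace ℝ (Fin n)}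

theorem continuous_Gm (hg : Continuous g) (hx : Continuous fun z : X × ℝ => x z.1 z.2) :
    Continuous fun z : X × ℝ => Gm g (x z.1) z.2 :=
  intervalIntegral.continuous_parametric_intervalIntegral_of_continuous
    (f := fun (z : X × ℝ) s => g (x z.1 s))
    (hg.comp (hx.comp ((continuous_fst.comp continuous_fst).prodMk continuous_snd)))
    continuous_snd

theorem continuousAt_thv (hg : Continuous g) (hx : Continuous fun z : X × ℝ => x z.1 z.2)
    {x₀ : X} (hB : IsUnit (Bm g (x x₀) T)) (hC : IsUnit (Cm g (x x₀) T)) :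
    ContinuousAt (fun v => thv g (x v) T) x₀ := by
  have hG := continuous_Gm g hg hx
  have hA : Continuous fun v => Am g (x v) T :=
    intervalIntegral.continuous_parametric_intervalIntegral_of_continuous' hG 0 T
  have hBm : Continuous fun v => Bm g (x v) T :=
    intervalIntegral.continuous_parametric_intervalIntegral_of_continuous'
      (hG.matrix_transpose.matrix_mul hG) 0 T
  have hBinv : ContinuousAt (fun v => (Bm g (x v) T)⁻¹) x₀ :=
    ContinuousAt.comp (f := fun v => Bm g (x v) T) (continuousAt_matrix_inv_of_isUnit hB)
      hBm.continuousAt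
  -- `B⁻¹` is continuous only at `x₀`, so it enters the integrands below as a parameter `z.1`
  have withBinv : ∀ {Y : Type} [TopologicalSpace Y] {F : Matrix (Fin p) (Fin p) ℝ × X → Y},
      Continuous F → ContinuousAt (fun v => F ((Bm g (x v) T)⁻¹, v)) x₀ := fun hF =>
    ContinuousAt.comp (f := fun v => ((Bm g (x v) T)⁻¹, v)) hF.continuousAt
      (hBinv.prodMk continuousAt_id)
  have hCinv : ContinuousAt (fun v => (Cm g (x v) T)⁻¹) x₀ :=
    ContinuousAt.comp (f := fun v => Cm g (x v) T) (continuousAt_matrix_inv_of_isUnit hC)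
      (withBinv (F := fun z => T • 1 - Am g (x z.2) T * z.1 * (Am g (x z.2) T)ᵀ)
        (continuous_const.sub (((hA.comp continuous_snd).matrix_mul continuous_fst).matrix_mul
          (hA.comp continuous_snd).matrix_transpose)))
  have hξ : ContinuousAt (fun v => xiv g (x v) T) x₀ := by
    refine hCinv.mv (withBinv (F := fun z => ∫ t in (0:ℝ)..T,
      mv (1 - Am g (x z.2) T * z.1 * (Gm g (x z.2) t)ᵀ) (x z.2 t)) ?_)
    have hGt : Continuous fun w : (Matrix (Fin p) (Fin p) ℝ × X) × ℝ => Gm g (x w.1.2) w.2 :=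
      hG.comp ((continuous_snd.comp continuous_fst).prodMk continuous_snd)
    have hxt : Continuous fun w : (Matrix (Fin p) (Fin p) ℝ × X) × ℝ => x w.1.2 w.2 :=
      hx.comp ((continuous_snd.comp continuous_fst).prodMk continuous_snd)
    exact intervalIntegral.continuous_parametric_intervalIntegral_of_continuous'
      ((continuous_const.sub (((hA.comp (continuous_snd.comp continuous_fst)).matrix_mul
        (continuous_fst.comp continuous_fst)).matrix_mul hGt.matrix_transpose)).mv hxt) 0 T
  have hJ : Continuous fun z : EuclideanSpace ℝ (Fin n) × X =>
      ∫ t in (0:ℝ)..T, mv (Gm g (x z.2) t)ᵀ (x z.2 t - z.1) := by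
    have hGt : Continuous fun w : (EuclideanSpace ℝ (Fin n) × X) × ℝ => Gm g (x w.1.2) w.2 :=
      hG.comp ((continuous_snd.comp continuous_fst).prodMk continuous_snd)
    have hxt : Continuous fun w : (EuclideanSpace ℝ (Fin n) × X) × ℝ => x w.1.2 w.2 :=
      hx.comp ((continuous_snd.comp continuous_fst).prodMk continuous_snd)
    exact intervalIntegral.continuous_parametric_intervalIntegral_of_continuous'
      (hGt.matrix_transpose.mv (hxt.sub (continuous_fst.comp continuous_fst))) 0 T
  exact hBinv.mv (ContinuousAt.comp (f := fun v => (xiv g (x v) T, v)) hJ.continuousAt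
    (hξ.prodMk continuousAt_id))

end Family

section Congr

variable {n p : ℕ} {T : ℝ} (g : EuclideanSpace ℝ (Fin n) → Matrix (Fin n) (Fin p) ℝ)
  {x y : ℝ → EuclideanSpace ℝ (Fin n)}

theorem Gm_congr (h : EqOn x y (Icc 0 T)) {t : ℝ} (ht : t ∈ Icc 0 T) : Gm g x t = Gm g y t := by
  refine intervalIntegral.integral_congr fun s hs => ?_
  rw [uIcc_of_le ht.1] at hs
  exact congrArg g (h (Icc_subset_Icc le_rfl ht.2 hs))

theorem Am_congr (hT : 0 ≤ T) (h : EqOn x y (Icc 0 T)) : Am g x T = Am g y T := by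
  refine intervalIntegral.integral_congr fun t ht => ?_
  rw [uIcc_of_le hT] at ht
  exact Gm_congr g h ht

theorem Bm_congr (hT : 0 ≤ T) (h : EqOn x y (Icc 0 T)) : Bm g x T = Bm g y T := by
  refine intervalIntegral.integral_congr fun t ht => ?_
  rw [uIcc_of_le hT] at ht
  simp only [Gm_congr g h ht]

theorem Cm_congr (hT : 0 ≤ T) (h : EqOn x y (Icc 0 T)) : Cm g x T = Cm g y T := by
  rw [Cm, Cm, Am_congr g hT h, Bm_congr g hT h]

theorem xiv_congr (hT : 0 ≤ T) (h : EqOn x y (Icc 0 T)) : xiv g x T = xiv g y T := by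
  rw [xiv, xiv, Cm_congr g hT h, Am_congr g hT h, Bm_congr g hT h]
  congr 1
  refine intervalIntegral.integral_congr fun t ht => ?_
  rw [uIcc_of_le hT] at ht
  simp only [Gm_congr g h ht, h ht]

theorem thv_congr (hT : 0 ≤ T) (h : EqOn x y (Icc 0 T)) : thv g x T = thv g y T := by
  rw [thv, thv, Bm_congr g hT h, xiv_congr g hT h]
  congr 1
  refine intervalIntegral.integral_congr fun t ht => ?_
  rw [uIcc_of_le hT] at ht
  simp only [Gm_congr g h ht, h ht]

end Congr

section Trajectories

variable {T : ℝ} (hT : 0 ≤ T) {r q : ℕ}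

theorem continuous_ext_apply {E : Type*} [TopologicalSpace E] {f : X → C(Icc (0:ℝ) T, E)}
    {s : X → ℝ} (hf : Continuous f) (hs : Continuous s) : Continuous fun x => ext hT (f x) (s x) :=
  hf.eval ((continuous_projIcc (h := hT)).comp hs)

theorem ext_eqOn {E : Type*} [TopologicalSpace E] {f : C(Icc (0:ℝ) T, E)} {m : ℝ → E}
    (h : ∀ t : Icc (0:ℝ) T, f t = m t) : EqOn (ext hT f) m (Icc 0 T) := fun t ht => by
  simp only [ext, projIcc_of_mem hT ht, h]

theorem pair_eqOn {m m' : ℝ → EuclideanSpace ℝ (Fin r)} {u u' : ℝ → EuclideanSpace ℝ (Fin q)}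
    {s : Set ℝ} (hm : EqOn m m' s) (hu : EqOn u u' s) : EqOn (pair m u) (pair m' u') s :=
  fun t ht => by simp only [pair, hm ht, hu ht]

theorem continuous_pair_uncurry {m : X → ℝ → EuclideanSpace ℝ (Fin r)}
    {u : X → ℝ → EuclideanSpace ℝ (Fin q)} (hm : Continuous fun z : X × ℝ => m z.1 z.2)
    (hu : Continuous fun z : X × ℝ => u z.1 z.2) :
    Continuous fun z : X × ℝ => pair (m z.1) (u z.1) z.2 :=
  (EuclideanSpace.equiv _ ℝ).symm.continuous.comp ((Fin.continuous_append r q).comp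
    (((EuclideanSpace.equiv _ ℝ).continuous.comp hm).prodMk
      ((EuclideanSpace.equiv _ ℝ).continuous.comp hu)))

theorem continuous_pair_ext {f : X → C(Icc (0:ℝ) T, EuclideanSpace ℝ (Fin r))}
    {h : X → C(Icc (0:ℝ) T, EuclideanSpace ℝ (Fin q))} (hf : Continuous f) (hh : Continuous h) :
    Continuous fun z : X × ℝ => pair (ext hT (f z.1)) (ext hT (h z.1)) z.2 :=
  continuous_pair_uncurry (m := fun v => ext hT (f v)) (u := fun v => ext hT (h v))
    (continuous_ext_apply hT (hf.comp continuous_fst) continuous_snd)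
    (continuous_ext_apply hT (hh.comp continuous_fst) continuous_snd)

end Trajectories

end ODEC

theorem stmt6_general {Ω : Type*} [MeasurableSpace Ω] (P : MeasureTheory.Measure Ω)
    {r q p : ℕ} {T : ℝ} (hT : 0 < T)
    (g : EuclideanSpace ℝ (Fin (r + q)) → Matrix (Fin (r + q)) (Fin p) ℝ)
    (hg : Continuous g)
    (U : Set C(Set.Icc (0:ℝ) T, EuclideanSpace ℝ (Fin q)))
    (hU : IsCompact U)
    (Un : ℕ → Set C(Set.Icc (0:ℝ) T, EuclideanSpace ℝ (Fin q)))
    (hUn : ∀ n, Un n ⊆ U)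
    (m : ℝ → EuclideanSpace ℝ (Fin r)) (hm : ContinuousOn m (Set.Icc 0 T))
    (mhat : ℕ → Ω → C(Set.Icc (0:ℝ) T, EuclideanSpace ℝ (Fin r)))
    (hcons : ∀ ε > (0:ℝ), Filter.Tendsto (fun n =>
      P {ω | ∃ t : Set.Icc (0:ℝ) T, ε ≤ ‖mhat n ω t - m ↑t‖}) Filter.atTop (nhds 0))
    (hinv : ∀ u ∈ U, IsUnit (Bm g (pair m (ext hT.le u)) T) ∧
      IsUnit (Cm g (pair m (ext hT.le u)) T)) :
    (∀ ε > (0:ℝ), Filter.Tendsto (fun n =>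
      P {ω | ∃ u ∈ Un n,
        ε ≤ ‖thv g (pair (ext hT.le (mhat n ω)) (ext hT.le u)) T
              - thv g (pair m (ext hT.le u)) T‖}) Filter.atTop (nhds 0)) ∧
    (∃ C : ℝ, ∀ n, ∀ u ∈ Un n, ‖thv g (pair m (ext hT.le u)) T‖ ≤ C) ∧
    (∀ δ > (0:ℝ), ∃ C : ℝ, ∀ᶠ n in Filter.atTop,
      P {ω | ∃ u ∈ Un n,
        C ≤ ‖thv g (pair (ext hT.le (mhat n ω)) (ext hT.le u)) T‖} < ENNReal.ofReal δ) := by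
  set m₀ : C(Icc (0:ℝ) T, EuclideanSpace ℝ (Fin r)) := ⟨fun t => m t, hm.domRestrict⟩
  set Φ := fun v : C(Icc (0:ℝ) T, EuclideanSpace ℝ (Fin r)) ×
      C(Icc (0:ℝ) T, EuclideanSpace ℝ (Fin q)) => thv g (pair (ext hT.le v.1) (ext hT.le v.2)) T
  have hEq : ∀ u : C(Icc (0:ℝ) T, EuclideanSpace ℝ (Fin q)),
      EqOn (pair (ext hT.le m₀) (ext hT.le u)) (pair m (ext hT.le u)) (Icc 0 T) :=
    fun u => pair_eqOn (ext_eqOn hT.le fun _ => rfl) (eqOn_refl _ _)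
  have hθ : ∀ u : C(Icc (0:ℝ) T, EuclideanSpace ℝ (Fin q)),
      thv g (pair m (ext hT.le u)) T = Φ (m₀, u) :=
    fun u => (thv_congr g hT.le (hEq u)).symm
  have hΦ : ∀ u ∈ U, ContinuousAt Φ (m₀, u) := fun u hu =>
    continuousAt_thv g hg (continuous_pair_ext hT.le continuous_fst continuous_snd)
      ((Bm_congr g hT.le (hEq u)).symm ▸ (hinv u hu).1)
      ((Cm_congr g hT.le (hEq u)).symm ▸ (hinv u hu).2)
  have hmhat : TendstoInMeasure P mhat atTop fun _ => m₀ :=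
    tendstoInMeasure_const_of_forall_exists_le_norm hcons
  have consistency : ∀ ε > (0:ℝ), Tendsto (fun n => P {ω | ∃ u ∈ Un n,
      ε ≤ ‖thv g (pair (ext hT.le (mhat n ω)) (ext hT.le u)) T
        - thv g (pair m (ext hT.le u)) T‖}) atTop (𝓝 0) := fun ε hε =>
    tendsto_of_tendsto_of_tendsto_of_le_of_le tendsto_const_nhds
      (hmhat.tendsto_measure_exists_le_dist hU hΦ hε)
      (fun _ => zero_le) fun n => measure_mono fun ω ⟨u, hu, hfar⟩ =>
        ⟨u, hUn n hu, by rwa [dist_eq_norm, ← hθ]⟩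
  obtain ⟨C, hC⟩ := hU.exists_bound_of_continuousOn fun u hu =>
    (ContinuousAt.comp (f := fun u => (m₀, u)) (hΦ u hu)
      (continuous_const.prodMk continuous_id).continuousAt).continuousWithinAt
  have bounded : ∀ n, ∀ u ∈ Un n, ‖thv g (pair m (ext hT.le u)) T‖ ≤ C :=
    fun n u hu => hθ u ▸ hC u (hUn n hu)
  exact ⟨consistency, ⟨C, bounded⟩, fun δ hδ =>
    ⟨C + 1, eventually_measure_exists_le_norm_lt bounded (consistency 1 one_pos) hδ⟩⟩

/-- Uniform consistency and boundedness of `θ̂_u` and `θ_u`.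
(`sup ≥ ε` statements are encoded in existential form; `‖·‖` is the Euclidean norm.) -/
theorem stmt6 {Ω : Type*} [MeasurableSpace Ω] (P : MeasureTheory.Measure Ω)
    [MeasureTheory.IsProbabilityMeasure P]
    {r q p : ℕ} (hr : 0 < r) (hq : 0 < q) (hp : 0 < p) {T : ℝ} (hT : 0 < T)
    (g : EuclideanSpace ℝ (Fin (r + q)) → Matrix (Fin (r + q)) (Fin p) ℝ)
    (hg : Continuous g)
    (U : Set C(Set.Icc (0:ℝ) T, EuclideanSpace ℝ (Fin q)))
    (hU : IsCompact U)
    (Un : ℕ → Set C(Set.Icc (0:ℝ) T, EuclideanSpace ℝ (Fin q)))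
    (hUn : ∀ n, Un n ⊆ U) (hUne : ∀ n, (Un n).Nonempty) (hUnc : ∀ n, IsCompact (Un n))
    (m : ℝ → EuclideanSpace ℝ (Fin r)) (hm : ContinuousOn m (Set.Icc 0 T))
    (mhat : ℕ → Ω → C(Set.Icc (0:ℝ) T, EuclideanSpace ℝ (Fin r)))
    (hmeas : ∀ n, @Measurable Ω C(Set.Icc (0:ℝ) T, EuclideanSpace ℝ (Fin r)) _
      (borel _) (mhat n))
    (hcons : ∀ ε > (0:ℝ), Filter.Tendsto (fun n =>
      P {ω | ∃ t : Set.Icc (0:ℝ) T, ε ≤ ‖mhat n ω t - m ↑t‖}) Filter.atTop (nhds 0))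
    (hinv : ∀ u ∈ U, IsUnit (Bm g (pair m (ext hT.le u)) T) ∧
      IsUnit (Cm g (pair m (ext hT.le u)) T))
    (hinvhat : ∀ n, ∀ᵐ ω ∂P, ∀ u ∈ Un n,
      IsUnit (Bm g (pair (ext hT.le (mhat n ω)) (ext hT.le u)) T) ∧
      IsUnit (Cm g (pair (ext hT.le (mhat n ω)) (ext hT.le u)) T)) :
    (∀ ε > (0:ℝ), Filter.Tendsto (fun n =>
      P {ω | ∃ u ∈ Un n,
        ε ≤ ‖thv g (pair (ext hT.le (mhat n ω)) (ext hT.le u)) T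
              - thv g (pair m (ext hT.le u)) T‖}) Filter.atTop (nhds 0)) ∧
    (∃ C : ℝ, ∀ n, ∀ u ∈ Un n, ‖thv g (pair m (ext hT.le u)) T‖ ≤ C) ∧
    (∀ δ > (0:ℝ), ∃ C : ℝ, ∀ᶠ n in Filter.atTop,
      P {ω | ∃ u ∈ Un n,
        C ≤ ‖thv g (pair (ext hT.le (mhat n ω)) (ext hT.le u)) T‖} < ENNReal.ofReal δ) :=
  stmt6_general P hT g hg U hU Un hUn m hm mhat hcons hinv
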